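/- arXiv:2110.01463 — 4 statements merged into one kernel-verified Lean document; each statement's English description precedes it below -/
import Mathlib

section
/- Let A, B, C be positive semi-definite real d×d matrices with A = B + C and B positive definite. Then for every nonzero vector x, (xᵀ A x)/(xᵀ B x) ≤ det(A)/det(B). -/
/-!
Write `B = Nᵀ N`. The congruence `x ↦ N x` turns the pair `(B + C, B)` into `(1 + M, 1)` with
`M = N⁻ᵀ C N⁻¹` positive semidefinite, and multiplies both determinants by `(det N)²`. So it
suffices that `yᵀ (1 + M) y ≤ det (1 + M) ‖y‖²`. By Cauchy–Schwarz (with `M = Pᵀ P`) the quadratic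
form of `M` is at most `tr M ‖y‖²`, and over the nonnegative eigenvalues `μᵢ` of `M`,
`1 + tr M = 1 + ∑ μᵢ ≤ ∏ (1 + μᵢ) = det (1 + M)`.
-/

open Matrix Finset
open scoped MatrixOrder

theorem Finset.one_add_sum_le_prod_one_add {ι R : Type*} [CommSemiring R] [PartialOrder R]
    [IsOrderedRing R] (s : Finset ι) {f : ι → R} (hf : ∀ i ∈ s, 0 ≤ f i) :
    1 + ∑ i ∈ s, f i ≤ ∏ i ∈ s, (1 + f i) := by
  classical
  induction s using Finset.induction_on with
  | empty => simp
  | insert a s ha ih =>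
    rw [sum_insert ha, prod_insert ha]
    have hfa := hf a (mem_insert_self a s)
    have hs : ∀ i ∈ s, 0 ≤ f i := fun i hi => hf i (mem_insert_of_mem hi)
    calc 1 + (f a + ∑ i ∈ s, f i) ≤ 1 + (f a + ∑ i ∈ s, f i) + f a * ∑ i ∈ s, f i :=
          le_add_of_nonneg_right (mul_nonneg hfa (sum_nonneg hs))
      _ = (1 + f a) * (1 + ∑ i ∈ s, f i) := by ring
      _ ≤ (1 + f a) * ∏ i ∈ s, (1 + f i) := by gcongr; exacts [add_nonneg zero_le_one hfa, ih hs]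

namespace Matrix
variable {m n : Type*} [Fintype m] [Fintype n]

theorem dotProduct_transpose_mul_mul_mulVec {R : Type*} [CommSemiring R] (P : Matrix m n R)
    (X : Matrix m m R) (x : n → R) :
    x ⬝ᵥ (Pᵀ * X * P) *ᵥ x = (P *ᵥ x) ⬝ᵥ X *ᵥ (P *ᵥ x) := by
  rw [← mulVec_mulVec, ← mulVec_mulVec, dotProduct_transpose_mulVec, dotProduct_comm]

theorem mulVec_dotProduct_mulVec_le_trace_mul_transpose_mul (N : Matrix m n ℝ) (x : n → ℝ) :
    (N *ᵥ x) ⬝ᵥ (N *ᵥ x) ≤ (N * Nᵀ).trace * (x ⬝ᵥ x) := by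
  simp only [dotProduct, trace, diag_apply, mul_apply, transpose_apply, mulVec]
  rw [sum_mul]
  exact sum_le_sum fun i _ => by simpa [sq] using sum_mul_sq_le_sq_mul_sq univ (N i) x

theorem PosSemidef.dotProduct_mulVec_le_trace_mul {A : Matrix n n ℝ} (hA : A.PosSemidef)
    (x : n → ℝ) : x ⬝ᵥ A *ᵥ x ≤ A.trace * (x ⬝ᵥ x) := by
  classical
  obtain ⟨N, rfl⟩ := CStarAlgebra.nonneg_iff_eq_star_mul_self.mp hA.nonneg
  rw [star_eq_conjTranspose, conjTranspose_eq_transpose_of_trivial, trace_mul_comm,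
    ← mulVec_mulVec, dotProduct_transpose_mulVec]
  exact mulVec_dotProduct_mulVec_le_trace_mul_transpose_mul N x

theorem IsHermitian.det_one_add {𝕜 : Type*} [RCLike 𝕜] [DecidableEq n] {A : Matrix n n 𝕜}
    (hA : A.IsHermitian) : det (1 + A) = ∏ i, (1 + (hA.eigenvalues i : 𝕜)) := by
  conv_lhs =>
    rw [hA.spectral_theorem, ← map_one (Unitary.conjStarAlgAut 𝕜 _ hA.eigenvectorUnitary),
      ← map_add]
  rw [Unitary.conjStarAlgAut_apply, det_mul_right_comm,
    Unitary.mul_star_self_of_mem hA.eigenvectorUnitary.2, one_mul, ← diagonal_one, diagonal_add,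
    det_diagonal]
  simp

theorem PosSemidef.one_add_trace_le_det_one_add [DecidableEq n] {A : Matrix n n ℝ}
    (hA : A.PosSemidef) : 1 + A.trace ≤ det (1 + A) := by
  rw [hA.isHermitian.det_one_add, hA.isHermitian.trace_eq_sum_eigenvalues]
  simpa using one_add_sum_le_prod_one_add univ fun i _ => hA.eigenvalues_nonneg i

theorem PosSemidef.dotProduct_one_add_mulVec_le_det_mul [DecidableEq n] {A : Matrix n n ℝ}
    (hA : A.PosSemidef) (x : n → ℝ) : x ⬝ᵥ (1 + A) *ᵥ x ≤ det (1 + A) * (x ⬝ᵥ x) := by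
  have hx : 0 ≤ x ⬝ᵥ x := by simpa using dotProduct_self_star_nonneg x
  rw [add_mulVec, one_mulVec, dotProduct_add]
  calc x ⬝ᵥ x + x ⬝ᵥ A *ᵥ x ≤ x ⬝ᵥ x + A.trace * (x ⬝ᵥ x) := by
        gcongr; exact hA.dotProduct_mulVec_le_trace_mul x
    _ = (1 + A.trace) * (x ⬝ᵥ x) := by ring
    _ ≤ det (1 + A) * (x ⬝ᵥ x) := by gcongr; exact hA.one_add_trace_le_det_one_add

theorem PosDef.dotProduct_add_mulVec_mul_det_le [DecidableEq n] {B C : Matrix n n ℝ}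
    (hB : B.PosDef) (hC : C.PosSemidef) (x : n → ℝ) :
    x ⬝ᵥ (B + C) *ᵥ x * det B ≤ det (B + C) * (x ⬝ᵥ B *ᵥ x) := by
  obtain ⟨N, rfl⟩ := CStarAlgebra.nonneg_iff_eq_star_mul_self.mp hB.posSemidef.nonneg
  rw [star_eq_conjTranspose, conjTranspose_eq_transpose_of_trivial] at hB ⊢
  have hN : IsUnit N.det := by
    refine isUnit_iff_ne_zero.mpr fun h => hB.det_pos.ne' ?_
    rw [det_mul, h, mul_zero]
  have hNt : IsUnit Nᵀ.det := by rwa [det_transpose]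
  set M := N⁻¹ᵀ * C * N⁻¹
  have hM : M.PosSemidef := by
    simpa [conjTranspose_eq_transpose_of_trivial] using hC.conjTranspose_mul_mul_same N⁻¹
  have hBC : Nᵀ * N + C = Nᵀ * (1 + M) * N := by
    rw [mul_add, add_mul, mul_one]
    congr 1
    simp only [M, transpose_nonsing_inv, ← mul_assoc, mul_nonsing_inv _ hNt, one_mul]
    rw [mul_assoc, nonsing_inv_mul _ hN, mul_one]
  rw [hBC, det_mul, det_mul, det_mul, det_transpose, dotProduct_transpose_mul_mul_mulVec,
    ← mulVec_mulVec, dotProduct_transpose_mulVec]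
  have := mul_le_mul_of_nonneg_left (hM.dotProduct_one_add_mulVec_le_det_mul (N *ᵥ x))
    (mul_self_nonneg N.det)
  linarith

end Matrix

theorem stmt0_general {d : ℕ} (A B C : Matrix (Fin d) (Fin d) ℝ)
    (hB : B.PosDef) (hC : C.PosSemidef)
    (hABC : A = B + C) :
    ∀ x : Fin d → ℝ, x ≠ 0 →
      (x ⬝ᵥ A *ᵥ x) / (x ⬝ᵥ B *ᵥ x) ≤ A.det / B.det := by
  intro x hx
  have hxBx : 0 < x ⬝ᵥ B *ᵥ x := by simpa using hB.dotProduct_mulVec_pos hx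
  rw [hABC, div_le_div_iff₀ hxBx hB.det_pos]
  exact hB.dotProduct_add_mulVec_mul_det_le hC x

theorem stmt0 {d : ℕ} (A B C : Matrix (Fin d) (Fin d) ℝ)
    (hA : A.PosSemidef) (hB : B.PosDef) (hC : C.PosSemidef)
    (hABC : A = B + C) :
    ∀ x : Fin d → ℝ, x ≠ 0 →
      (x ⬝ᵥ A *ᵥ x) / (x ⬝ᵥ B *ᵥ x) ≤ A.det / B.det :=
  stmt0_general A B C hB hC hABC
end

section
/- Let V_g, ΔV be symmetric positive semi-definite d×d matrices and λ > 0, with V' = V_g + λI − ΔV positive definite (i.e., ΔV ⪯ V_g + λI). If det(V_g + λI)/det(V') ≤ γ, then for every nonzero x ∈ ℝ^d, xᵀ(V_g + λI)x ≤ γ · xᵀ V' x. -/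
/-!
Write `A = Vg + λI` and `B = A - ΔV`, so `0 < B ≤ A` in the Loewner order. Conjugating by
`B^{-1/2}` turns this into `1 ≤ M := B^{-1/2} A B^{-1/2}`, so every eigenvalue of `M` is at least
`1` and hence at most the product of all of them, `det M = det A / det B`. Thus
`M ≤ (det A / det B) • 1`, and conjugating back gives `A ≤ (det A / det B) • B`.
-/

open Matrix

open scoped MatrixOrder

theorem Finset.le_prod_of_one_le {ι R : Type*} [CommSemiring R] [PartialOrder R]
    [IsOrderedRing R] {s : Finset ι} {f : ι → R} (hf : ∀ j ∈ s, 1 ≤ f j) {i : ι} (hi : i ∈ s) :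
    f i ≤ ∏ j ∈ s, f j := by
  classical
  rw [← Finset.mul_prod_erase _ _ hi]
  exact le_mul_of_one_le_right (zero_le_one.trans (hf i hi))
    (Finset.one_le_prod fun j hj ↦ hf j (Finset.mem_of_mem_erase hj))

namespace Matrix

variable {n : Type*} [Fintype n] [DecidableEq n]

theorem le_det_smul_one_of_one_le {M : Matrix n n ℝ} (hM : 1 ≤ M) : M ≤ M.det • 1 := by
  have hH : M.IsHermitian := IsSelfAdjoint.of_nonneg (zero_le_one.trans hM)
  have h1 : ∀ i, 1 ≤ hH.eigenvalues i := fun i ↦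
    (CFC.one_le_iff M hH.isSelfAdjoint).mp hM _ (hH.eigenvalues_mem_spectrum_real i)
  rw [← Algebra.algebraMap_eq_smul_one, le_algebraMap_iff_spectrum_le hH.isSelfAdjoint,
    hH.spectrum_real_eq_range_eigenvalues, hH.det_eq_prod_eigenvalues]
  rintro _ ⟨i, rfl⟩
  simpa using Finset.le_prod_of_one_le (fun j _ ↦ h1 j) (Finset.mem_univ i)

theorem le_det_div_det_smul_of_le {A B : Matrix n n ℝ} (hB : B.PosDef) (hBA : B ≤ A) :
    A ≤ (A.det / B.det) • B := by
  set S := CFC.sqrt B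
  have hS : IsSelfAdjoint S := IsSelfAdjoint.of_nonneg (CFC.sqrt_nonneg B)
  have hSS : S * S = B := CFC.sqrt_mul_sqrt_self B hB.posSemidef.nonneg
  have hSdet : IsUnit S.det := (isUnit_iff_isUnit_det S).mp
    (CFC.isUnit_sqrt_iff_isStrictlyPositive.mpr hB.isStrictlyPositive)
  set T := S⁻¹
  have hT : IsSelfAdjoint T := IsHermitian.inv hS
  have hTS : T * S = 1 := nonsing_inv_mul S hSdet
  have hST : S * T = 1 := mul_nonsing_inv S hSdet
  have hTBT : T * B * T = 1 := by
    rw [← hSS, ← Matrix.mul_assoc, hTS, Matrix.one_mul, hST]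
  have hSMS : S * (T * A * T) * S = A := by
    simp only [← Matrix.mul_assoc, hST, Matrix.one_mul]
    rw [Matrix.mul_assoc, hTS, Matrix.mul_one]
  have hdet : (T * A * T).det = A.det / B.det := by
    rw [det_mul, det_mul, det_nonsing_inv, ← hSS, det_mul, Ring.inverse_eq_inv']
    field_simp
  have key := hS.conjugate_le_conjugate
    (le_det_smul_one_of_one_le (hTBT ▸ hT.conjugate_le_conjugate hBA))
  rwa [hSMS, hdet, Matrix.mul_smul, Matrix.mul_one, Matrix.smul_mul, hSS] at key

theorem dotProduct_mulVec_le_det_div_det_mul {A B : Matrix n n ℝ} (hB : B.PosDef) (hBA : B ≤ A)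
    (x : n → ℝ) : x ⬝ᵥ A *ᵥ x ≤ A.det / B.det * (x ⬝ᵥ B *ᵥ x) := by
  have := (le_iff.mp (le_det_div_det_smul_of_le hB hBA)).dotProduct_mulVec_nonneg x
  simpa [sub_mulVec, smul_mulVec, dotProduct_sub, dotProduct_smul] using this

end Matrix

theorem stmt5_general {d : ℕ} (Vg ΔV : Matrix (Fin d) (Fin d) ℝ) (lam γ : ℝ)
    (hΔV : ΔV.PosSemidef)
    (hV' : (Vg + lam • (1 : Matrix (Fin d) (Fin d) ℝ) - ΔV).PosDef)
    (hdet : (Vg + lam • (1 : Matrix (Fin d) (Fin d) ℝ)).det /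
        (Vg + lam • (1 : Matrix (Fin d) (Fin d) ℝ) - ΔV).det ≤ γ) :
    ∀ x : Fin d → ℝ, x ≠ 0 →
      x ⬝ᵥ (Vg + lam • (1 : Matrix (Fin d) (Fin d) ℝ)) *ᵥ x ≤
        γ * (x ⬝ᵥ (Vg + lam • (1 : Matrix (Fin d) (Fin d) ℝ) - ΔV) *ᵥ x) := by
  intro x _
  set A := Vg + lam • (1 : Matrix (Fin d) (Fin d) ℝ)
  have hBA : A - ΔV ≤ A := le_iff.mpr (by rwa [sub_sub_cancel])
  calc x ⬝ᵥ A *ᵥ x ≤ A.det / (A - ΔV).det * (x ⬝ᵥ (A - ΔV) *ᵥ x) :=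
        dotProduct_mulVec_le_det_div_det_mul hV' hBA x
    _ ≤ γ * (x ⬝ᵥ (A - ΔV) *ᵥ x) :=
        mul_le_mul_of_nonneg_right hdet (hV'.posSemidef.dotProduct_mulVec_nonneg x)

theorem stmt5 {d : ℕ} (Vg ΔV : Matrix (Fin d) (Fin d) ℝ) (lam γ : ℝ) (hlam : 0 < lam)
    (hVg : Vg.PosSemidef) (hΔV : ΔV.PosSemidef)
    (hV' : (Vg + lam • (1 : Matrix (Fin d) (Fin d) ℝ) - ΔV).PosDef)
    (hdet : (Vg + lam • (1 : Matrix (Fin d) (Fin d) ℝ)).det /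
        (Vg + lam • (1 : Matrix (Fin d) (Fin d) ℝ) - ΔV).det ≤ γ) :
    ∀ x : Fin d → ℝ, x ≠ 0 →
      x ⬝ᵥ (Vg + lam • (1 : Matrix (Fin d) (Fin d) ℝ)) *ᵥ x ≤
        γ * (x ⬝ᵥ (Vg + lam • (1 : Matrix (Fin d) (Fin d) ℝ) - ΔV) *ᵥ x) :=
  stmt5_general Vg ΔV lam γ hΔV hV' hdet
end

section
/- Let x₁, …, x_T ∈ ℝ^d with ‖x_t‖₂ ≤ 1, λ ≥ 1, and V_t = λI + Σ_{s=1}^{t} x_s x_sᵀ. Then Σ_{t=1}^{T} xₜᵀ V_{t−1}⁻¹ xₜ ≤ 2 log(det(V_T)/det(λI)). -/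
/-!
Write `q_t = xₜᵀ V_{t-1}⁻¹ xₜ`. By the matrix determinant lemma the rank-one update multiplies the
determinant by `1 + q_t`, so `log det` grows by exactly `log (1 + q_t)` at each step. Since
`V_{t-1} ≥ λ I ≥ I` and `‖xₜ‖ ≤ 1`, each `q_t ≤ 1`, and on `[0, 1]` we have `u ≤ 2 log (1 + u)`;
summing, the right-hand side telescopes.
-/

open Matrix Finset

lemma Real.le_two_mul_log_one_add {u : ℝ} (h0 : 0 ≤ u) (h1 : u ≤ 1) :
    u ≤ 2 * Real.log (1 + u) := by
  have h := Real.one_sub_inv_le_log_of_pos (by linarith : 0 < 1 + u)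
  have : (1 + u)⁻¹ ≤ 1 - u / 2 := by
    rw [inv_eq_one_div, div_le_iff₀ (by linarith)]
    nlinarith
  linarith

namespace Matrix

variable {n : Type*} [Fintype n] [DecidableEq n]

lemma det_add_vecMulVec {α : Type*} [CommRing α] {A : Matrix n n α} (hA : IsUnit A.det)
    (u v : n → α) :
    (A + vecMulVec u v).det = A.det * (1 + v ⬝ᵥ A⁻¹ *ᵥ u) := by
  rw [vecMulVec_eq Unit, det_add_replicateCol_mul_replicateRow hA]
  congr 1
  rw [det_unique, add_apply, one_apply_eq, ← replicateRow_vecMul,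
    replicateRow_mul_replicateCol_apply, ← dotProduct_mulVec]

/-- With `y = A⁻¹ x`: `0 ≤ ‖x - c y‖² = xᵀx - 2c xᵀy + c² yᵀy` and `c yᵀy ≤ yᵀA y = xᵀy`. -/
lemma mul_dotProduct_inv_mulVec_le {A : Matrix n n ℝ} (hA : IsUnit A.det) {c : ℝ} (hc : 0 ≤ c)
    (hAc : (A - c • 1).PosSemidef) (x : n → ℝ) :
    c * (x ⬝ᵥ A⁻¹ *ᵥ x) ≤ x ⬝ᵥ x := by
  set y := A⁻¹ *ᵥ x
  have hx : x = A *ᵥ y := by rw [mulVec_mulVec, mul_nonsing_inv A hA, one_mulVec]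
  have hy : c * (y ⬝ᵥ y) ≤ x ⬝ᵥ y := by
    have := hAc.dotProduct_mulVec_nonneg y
    rw [star_trivial, sub_mulVec, smul_mulVec, one_mulVec, dotProduct_sub, dotProduct_smul,
      smul_eq_mul, dotProduct_comm y, ← hx] at this
    linarith
  have hsq : 0 ≤ (x - c • y) ⬝ᵥ (x - c • y) := by
    simpa using dotProduct_star_self_nonneg (x - c • y)
  simp only [sub_dotProduct, dotProduct_sub, smul_dotProduct, dotProduct_smul, smul_eq_mul,
    dotProduct_comm y x] at hsq
  nlinarith

lemma PosDef.dotProduct_inv_mulVec_le_two_mul_log_det_sub {A : Matrix n n ℝ} (hA : A.PosDef)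
    {x : n → ℝ} (hx : x ⬝ᵥ A⁻¹ *ᵥ x ≤ 1) :
    x ⬝ᵥ A⁻¹ *ᵥ x ≤ 2 * (Real.log (A + vecMulVec x x).det - Real.log A.det) := by
  have hq : 0 ≤ x ⬝ᵥ A⁻¹ *ᵥ x := by simpa using hA.inv.posSemidef.dotProduct_mulVec_nonneg x
  rw [det_add_vecMulVec hA.det_pos.ne'.isUnit x x, Real.log_mul hA.det_pos.ne' (by linarith),
    add_sub_cancel_left]
  exact Real.le_two_mul_log_one_add hq hx

end Matrix

theorem stmt7 {d : ℕ} (T : ℕ) (x : ℕ → (Fin d → ℝ)) (lam : ℝ) (hlam : 1 ≤ lam)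
    (hx : ∀ t, x t ⬝ᵥ x t ≤ 1)
    (V : ℕ → Matrix (Fin d) (Fin d) ℝ)
    (hV : ∀ t, V t = lam • (1 : Matrix (Fin d) (Fin d) ℝ) +
      ∑ s ∈ Finset.range t, vecMulVec (x s) (x s)) :
    ∑ t ∈ Finset.range T, x t ⬝ᵥ (V t)⁻¹ *ᵥ x t ≤
      2 * Real.log ((V T).det / (lam • (1 : Matrix (Fin d) (Fin d) ℝ)).det) := by
  have hGram t : (∑ s ∈ range t, vecMulVec (x s) (x s)).PosSemidef :=
    posSemidef_sum _ fun s _ => by simpa using posSemidef_vecMulVec_self_star (x s)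
  have hPD t : (V t).PosDef := by
    rw [hV t]; exact (PosDef.one.smul (by linarith)).add_posSemidef (hGram t)
  have hsucc t : V (t + 1) = V t + vecMulVec (x t) (x t) := by
    rw [hV, hV, sum_range_succ, add_assoc]
  have hq t : x t ⬝ᵥ (V t)⁻¹ *ᵥ x t ≤ 1 := by
    have hV1 : (V t - (1 : ℝ) • 1).PosSemidef := by
      have : V t - (1 : ℝ) • 1 = (lam - 1) • 1 + ∑ s ∈ range t, vecMulVec (x s) (x s) := by
        rw [hV t, sub_smul, one_smul]; abel
      rw [this]
      exact (PosSemidef.one.smul (by linarith)).add (hGram t)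
    simpa using (mul_dotProduct_inv_mulVec_le (hPD t).det_pos.ne'.isUnit zero_le_one hV1 (x t)).trans
      (hx t)
  have hV0 : V 0 = lam • (1 : Matrix (Fin d) (Fin d) ℝ) := by simp [hV 0]
  calc ∑ t ∈ range T, x t ⬝ᵥ (V t)⁻¹ *ᵥ x t
      ≤ ∑ t ∈ range T, 2 * (Real.log (V (t + 1)).det - Real.log (V t).det) :=
        sum_le_sum fun t _ => by
          rw [hsucc]; exact (hPD t).dotProduct_inv_mulVec_le_two_mul_log_det_sub (hq t)
    _ = 2 * Real.log ((V T).det / (lam • (1 : Matrix (Fin d) (Fin d) ℝ)).det) := by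
        rw [← mul_sum, sum_range_sub (fun t => Real.log (V t).det), ← hV0,
          Real.log_div (hPD T).det_pos.ne' (hPD 0).det_pos.ne']
end

section
/- Let V, W be symmetric d×d matrices with W positive definite, V ⪰ W, and suppose det(V)/det(W) ≤ γ. Then for every nonzero x ∈ ℝ^d, xᵀ V x ≤ γ · xᵀ W x, and consequently xᵀ(V − W)x ≤ (γ − 1)·xᵀ W x. -/
/-!
Whitening by `S = W^{1/2}` turns `W ≤ V` into `1 ≤ M` for `M = S⁻¹ V S⁻¹`, whose determinant is
`det V / det W`. All eigenvalues of `M` are at least `1`, so each one is bounded by their product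
`det M`; hence `M ≤ (det V / det W) • 1`, and conjugating back by `S` gives
`V ≤ (det V / det W) • W ≤ γ • W`.
-/

open Matrix

open scoped MatrixOrder

namespace Matrix

variable {n : Type*} [Fintype n]

open scoped ComplexOrder in
lemma dotProduct_mulVec_le_of_le {𝕜 : Type*} [RCLike 𝕜] {A B : Matrix n n 𝕜} (hAB : A ≤ B)
    (x : n → 𝕜) : star x ⬝ᵥ A *ᵥ x ≤ star x ⬝ᵥ B *ᵥ x := by
  simpa [sub_mulVec, dotProduct_sub] using (le_iff.mp hAB).dotProduct_mulVec_nonneg x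

variable [DecidableEq n]

lemma le_det_smul_one_of_one_le_s12 {A : Matrix n n ℝ} (hA : 1 ≤ A) : A ≤ A.det • 1 := by
  have hA_sa : IsSelfAdjoint A := by
    simpa using (IsSelfAdjoint.of_nonneg (sub_nonneg.mpr hA)).add (.one _)
  have hA_herm : A.IsHermitian := hA_sa
  have one_le_eig (i : n) : 1 ≤ hA_herm.eigenvalues i :=
    (CFC.one_le_iff A).mp hA _ (hA_herm.eigenvalues_mem_spectrum_real i)
  rw [← Algebra.algebraMap_eq_smul_one, le_algebraMap_iff_spectrum_le]
  rintro x hx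
  obtain ⟨i, rfl⟩ := hA_herm.spectrum_real_eq_range_eigenvalues ▸ hx
  calc hA_herm.eigenvalues i = ∏ j ∈ {i}, hA_herm.eigenvalues j := by simp
    _ ≤ ∏ j, hA_herm.eigenvalues j :=
      Finset.prod_le_prod_of_subset_of_one_le (Finset.subset_univ _)
        (fun j _ => zero_le_one.trans (one_le_eig j)) (fun j _ _ => one_le_eig j)
    _ = A.det := by simpa using hA_herm.det_eq_prod_eigenvalues.symm

lemma le_det_div_smul_of_le {V W : Matrix n n ℝ} (hW : W.PosDef) (hWV : W ≤ V) :
    V ≤ (V.det / W.det) • W := by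
  set S := CFC.sqrt W
  have hS_sa : IsSelfAdjoint S := (CFC.sqrt_nonneg W).isSelfAdjoint
  have hSS : S * S = W := CFC.sqrt_mul_sqrt_self W hW.posSemidef.nonneg
  have hS_unit : IsUnit S.det :=
    (isUnit_iff_isUnit_det S).mp ((CFC.isUnit_sqrt_iff W hW.posSemidef.nonneg).mpr hW.isUnit)
  have hdetW : W.det = S.det * S.det := by rw [← hSS, det_mul]
  set T := S⁻¹
  have hT_sa : IsSelfAdjoint T := IsHermitian.inv hS_sa
  have hTS : T * S = 1 := nonsing_inv_mul S hS_unit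
  have hST : S * T = 1 := mul_nonsing_inv S hS_unit
  have hSMS : S * (T * V * T) * S = V := by
    simp only [← mul_assoc, hST, one_mul]; rw [mul_assoc, hTS, mul_one]
  have hTWT : T * W * T = 1 := by
    rw [← hSS, ← mul_assoc, hTS, one_mul, hST]
  have hdetM : (T * V * T).det = V.det / W.det := by
    rw [det_mul, det_mul, det_nonsing_inv, Ring.inverse_eq_inv, hdetW]
    field_simp
  have one_le_M : 1 ≤ T * V * T := hTWT ▸ hT_sa.conjugate_le_conjugate hWV
  calc V = S * (T * V * T) * S := hSMS.symm
    _ ≤ S * ((V.det / W.det) • 1) * S :=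
      hS_sa.conjugate_le_conjugate (hdetM ▸ le_det_smul_one_of_one_le_s12 one_le_M)
    _ = (V.det / W.det) • W := by rw [mul_smul_one, smul_mul, hSS]

end Matrix

theorem stmt12_general {d : ℕ} (V W : Matrix (Fin d) (Fin d) ℝ)
    (hWpd : W.PosDef)
    (hdom : (V - W).PosSemidef) (γ : ℝ) (hdet : V.det / W.det ≤ γ) :
    ∀ x : Fin d → ℝ, x ≠ 0 →
      x ⬝ᵥ V *ᵥ x ≤ γ * (x ⬝ᵥ W *ᵥ x) ∧
      x ⬝ᵥ (V - W) *ᵥ x ≤ (γ - 1) * (x ⬝ᵥ W *ᵥ x) := by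
  have hV_le : V ≤ γ • W := (le_det_div_smul_of_le hWpd hdom).trans
    (smul_le_smul_of_nonneg_right hdet hWpd.posSemidef.nonneg)
  intro x _
  have hquad : x ⬝ᵥ V *ᵥ x ≤ γ * (x ⬝ᵥ W *ᵥ x) := by
    simpa [smul_mulVec] using dotProduct_mulVec_le_of_le hV_le x
  refine ⟨hquad, ?_⟩
  rw [sub_mulVec, dotProduct_sub]
  linarith

theorem stmt12 {d : ℕ} (V W : Matrix (Fin d) (Fin d) ℝ)
    (hV : V.IsSymm) (hW : W.IsSymm) (hWpd : W.PosDef)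
    (hdom : (V - W).PosSemidef) (γ : ℝ) (hdet : V.det / W.det ≤ γ) :
    ∀ x : Fin d → ℝ, x ≠ 0 →
      x ⬝ᵥ V *ᵥ x ≤ γ * (x ⬝ᵥ W *ᵥ x) ∧
      x ⬝ᵥ (V - W) *ᵥ x ≤ (γ - 1) * (x ⬝ᵥ W *ᵥ x) :=
  stmt12_general V W hWpd hdom γ hdet
end
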